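/- arXiv:2304.02305 — 5 statements merged into one kernel-verified Lean document; each statement's English description precedes it below -/
import Mathlib

section
/- Let D(u) = D_i(1 - 4u + 3u^2) + D_g(4u - 3u^2) with D_i, D_g real. Then D is positive on [0,α)∪(β,1] and negative on (α,β) for some 0 < α < β < 1 if and only if D_i > 4D_g > 0, and in that case α = 2/3 - ω/3 and β = 2/3 + ω/3 where ω = sqrt((D_i - 4D_g)/(D_i - D_g)). -/
lemma aux_main (Di Dg : ℝ) (h1 : Di > 4 * Dg) (h2 : 4 * Dg > 0) (ω α β : ℝ)
    (hω : ω = Real.sqrt ((Di - 4*Dg) / (Di - Dg)))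
    (hα : α = 2/3 - ω/3) (hβ : β = 2/3 + ω/3) :
    0 < α ∧ α < β ∧ β < 1 ∧
      (∀ u : ℝ, ((0 ≤ u ∧ u < α) ∨ (β < u ∧ u ≤ 1)) →
        0 < Di * (1 - 4*u + 3*u^2) + Dg * (4*u - 3*u^2)) ∧
      (∀ u : ℝ, α < u → u < β →
        Di * (1 - 4*u + 3*u^2) + Dg * (4*u - 3*u^2) < 0) := by
  have hDg : 0 < Dg := by linarith
  have hA : 0 < Di - Dg := by linarith
  have harg : 0 < (Di - 4*Dg) / (Di - Dg) := div_pos (by linarith) hA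
  have hω0 : 0 < ω := by rw [hω]; exact Real.sqrt_pos.mpr harg
  have hω2 : ω^2 = (Di - 4*Dg) / (Di - Dg) := by
    rw [hω, Real.sq_sqrt harg.le]
  have hAω : (Di - Dg) * ω^2 = Di - 4*Dg := by
    rw [hω2]; field_simp
  have hω1 : ω < 1 := by
    by_contra h
    push_neg at h
    have h' : 1 ≤ ω^2 := by nlinarith
    nlinarith [mul_nonneg hA.le (by linarith : (0:ℝ) ≤ ω^2 - 1)]
  have key : ∀ u : ℝ, Di * (1 - 4*u + 3*u^2) + Dg * (4*u - 3*u^2)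
      = 3*(Di - Dg)*(u - 2/3)^2 - (Di - 4*Dg)/3 := by
    intro u; ring
  refine ⟨by rw [hα]; linarith, by rw [hα, hβ]; linarith, by rw [hβ]; linarith, ?_, ?_⟩
  · intro u hu
    rw [key u]
    rcases hu with ⟨hu0, hu1⟩ | ⟨hu0, hu1⟩
    · rw [hα] at hu1
      have h3 : 0 < (2/3 - u - ω/3) := by linarith
      have h4 : 0 < (2/3 - u + ω/3) := by linarith
      nlinarith [mul_pos hA (mul_pos h3 h4)]
    · rw [hβ] at hu0
      have h3 : 0 < (u - 2/3 - ω/3) := by linarith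
      have h4 : 0 < (u - 2/3 + ω/3) := by linarith
      nlinarith [mul_pos hA (mul_pos h3 h4)]
  · intro u hu0 hu1
    rw [key u]
    rw [hα] at hu0; rw [hβ] at hu1
    have h3 : 0 < (ω/3 - (u - 2/3)) := by linarith
    have h4 : 0 < (ω/3 + (u - 2/3)) := by linarith
    nlinarith [mul_pos hA (mul_pos h3 h4)]

theorem stmt_0 (Di Dg : ℝ) :
    ((∃ α β : ℝ, 0 < α ∧ α < β ∧ β < 1 ∧
        (∀ u : ℝ, ((0 ≤ u ∧ u < α) ∨ (β < u ∧ u ≤ 1)) →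
          0 < Di * (1 - 4*u + 3*u^2) + Dg * (4*u - 3*u^2)) ∧
        (∀ u : ℝ, α < u → u < β →
          Di * (1 - 4*u + 3*u^2) + Dg * (4*u - 3*u^2) < 0)) ↔
      (Di > 4 * Dg ∧ 4 * Dg > 0)) ∧
    ((Di > 4 * Dg ∧ 4 * Dg > 0) →
      let ω := Real.sqrt ((Di - 4*Dg) / (Di - Dg))
      let α := 2/3 - ω/3
      let β := 2/3 + ω/3
      0 < α ∧ α < β ∧ β < 1 ∧
      (∀ u : ℝ, ((0 ≤ u ∧ u < α) ∨ (β < u ∧ u ≤ 1)) →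
        0 < Di * (1 - 4*u + 3*u^2) + Dg * (4*u - 3*u^2)) ∧
      (∀ u : ℝ, α < u → u < β →
        Di * (1 - 4*u + 3*u^2) + Dg * (4*u - 3*u^2) < 0)) := by
  constructor
  · constructor
    · rintro ⟨α, β, hα, hαβ, hβ, hpos, hneg⟩
      have hDi : 0 < Di := by
        have := hpos 0 (Or.inl ⟨le_refl 0, hα⟩)
        nlinarith [this]
      have hDg : 0 < Dg := by
        have := hpos 1 (Or.inr ⟨hβ, le_refl 1⟩)
        nlinarith [this]
      set m := (α + β)/2 with hm
      have hm0 : 0 < m := by simp only [hm]; linarith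
      have hm1 : m < 1 := by simp only [hm]; linarith
      have hnm := hneg m (by simp only [hm]; linarith) (by simp only [hm]; linarith)
      have hA : 0 < Di - Dg := by
        by_contra h
        push_neg at h
        nlinarith [mul_nonneg (by linarith : (0:ℝ) ≤ Dg - Di)
          (by nlinarith : (0:ℝ) ≤ 4*m - 3*m^2)]
      constructor
      · nlinarith [mul_nonneg hA.le (sq_nonneg (m - 2/3))]
      · nlinarith [mul_nonneg hA.le (sq_nonneg (m - 2/3)),
          mul_nonneg hA.le (sq_nonneg (m - 2/3))]
    · rintro ⟨h1, h2⟩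
      obtain ⟨a1, a2, a3, a4, a5⟩ := aux_main Di Dg h1 h2 _ _ _ rfl rfl rfl
      exact ⟨_, _, a1, a2, a3, a4, a5⟩
  · rintro ⟨h1, h2⟩ ω α β
    exact aux_main Di Dg h1 h2 ω α β rfl rfl rfl
end

section
/- Let g(u) = λ_g u(1-u) + (λ_i - λ_g - (k_i - k_g)) u(1-u)^2 - k_g u with nonnegative parameters λ_i, λ_g, k_i, k_g. Then g satisfies: g(0)=g(1)=0, g < 0 on (0,γ) and g > 0 on (γ,1) for some γ ∈ (0,1), if and only if k_g = 0, λ_g > 0 and r_i := k_i - λ_i > 0; in that case γ = r_i/(r_i + λ_g). -/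
lemma aux_main_s2 (li lg ki kg : ℝ) (hkg : kg = 0) (hlg : 0 < lg) (hr : 0 < ki - li) :
    let γ := (ki - li) / ((ki - li) + lg)
    0 < γ ∧ γ < 1 ∧
    (∀ u : ℝ, 0 < u → u < γ →
      lg * u * (1-u) + (li - lg - (ki - kg)) * u * (1-u)^2 - kg * u < 0) ∧
    (∀ u : ℝ, γ < u → u < 1 →
      0 < lg * u * (1-u) + (li - lg - (ki - kg)) * u * (1-u)^2 - kg * u) := by
  subst hkg
  intro γ
  set r := ki - li with hrdef
  have hden : 0 < r + lg := by linarith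
  have hγ0 : 0 < γ := div_pos hr hden
  have hγ1 : γ < 1 := (div_lt_one hden).2 (by linarith)
  refine ⟨hγ0, hγ1, ?_, ?_⟩
  · intro u hu0 huγ
    have h1 : u * (r + lg) < r := (lt_div_iff₀ hden).mp huγ
    have heq : lg * u * (1-u) + (li - lg - (ki - 0)) * u * (1-u)^2 - 0 * u
        = u * (1-u) * ((r + lg) * u - r) := by rw [hrdef]; ring
    rw [heq]
    have h2 : (r + lg) * u - r < 0 := by nlinarith
    have h3 : 0 < u * (1 - u) := mul_pos hu0 (by linarith)
    nlinarith
  · intro u huγ hu1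
    have h1 : r < u * (r + lg) := (div_lt_iff₀ hden).mp huγ
    have heq : lg * u * (1-u) + (li - lg - (ki - 0)) * u * (1-u)^2 - 0 * u
        = u * (1-u) * ((r + lg) * u - r) := by rw [hrdef]; ring
    rw [heq]
    have hu0 : 0 < u := lt_trans hγ0 huγ
    have h2 : 0 < (r + lg) * u - r := by nlinarith
    have h3 : 0 < u * (1 - u) := mul_pos hu0 (by linarith)
    nlinarith

theorem stmt_2 (li lg ki kg : ℝ) (hli : 0 ≤ li) (hlg : 0 ≤ lg)
    (hki : 0 ≤ ki) (hkg : 0 ≤ kg) :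
    ((∃ γ : ℝ, 0 < γ ∧ γ < 1 ∧
        (lg * 0 * (1-0) + (li - lg - (ki - kg)) * 0 * (1-0)^2 - kg * 0 = 0) ∧
        (lg * 1 * (1-1) + (li - lg - (ki - kg)) * 1 * (1-1)^2 - kg * 1 = 0) ∧
        (∀ u : ℝ, 0 < u → u < γ →
          lg * u * (1-u) + (li - lg - (ki - kg)) * u * (1-u)^2 - kg * u < 0) ∧
        (∀ u : ℝ, γ < u → u < 1 →
          0 < lg * u * (1-u) + (li - lg - (ki - kg)) * u * (1-u)^2 - kg * u)) ↔
      (kg = 0 ∧ 0 < lg ∧ 0 < ki - li)) ∧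
    ((kg = 0 ∧ 0 < lg ∧ 0 < ki - li) →
      let γ := (ki - li) / ((ki - li) + lg)
      0 < γ ∧ γ < 1 ∧
      (∀ u : ℝ, 0 < u → u < γ →
        lg * u * (1-u) + (li - lg - (ki - kg)) * u * (1-u)^2 - kg * u < 0) ∧
      (∀ u : ℝ, γ < u → u < 1 →
        0 < lg * u * (1-u) + (li - lg - (ki - kg)) * u * (1-u)^2 - kg * u)) := by
  constructor
  · constructor
    · rintro ⟨γ, hγ0, hγ1, -, -, hneg, hpos⟩
      -- Step 1: kg = 0
      have hkg0 : kg = 0 := by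
        by_contra h
        have hkgp : 0 < kg := lt_of_le_of_ne hkg (Ne.symm h)
        set c := li - lg - (ki - kg) with hc
        set ε := min ((1-γ)/2) (kg/(lg + |c| + 1)) with hε
        have habs : 0 ≤ |c| := abs_nonneg c
        have hc1 : c ≤ |c| := le_abs_self c
        have hc2 : -|c| ≤ c := neg_abs_le c
        have hd : 0 < lg + |c| + 1 := by linarith
        have hεpos : 0 < ε := lt_min (by linarith) (div_pos hkgp hd)
        have hε1 : ε < 1 := lt_of_le_of_lt (min_le_left _ _) (by linarith)
        have hεγ : γ < 1 - ε := by
          have := min_le_left ((1-γ)/2) (kg/(lg + |c| + 1))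
          rw [hε]; linarith
        have hεk : ε * (lg + |c| + 1) ≤ kg := by
          have := min_le_right ((1-γ)/2) (kg/(lg + |c| + 1))
          calc ε * (lg + |c| + 1) ≤ (kg/(lg + |c| + 1)) * (lg + |c| + 1) := by
                exact mul_le_mul_of_nonneg_right this (le_of_lt hd)
            _ = kg := by field_simp
        have hu := hpos (1-ε) hεγ (by linarith)
        -- g(1-ε) = (1-ε)*(lg*ε + c*ε^2 - kg)
        have heq : lg * (1-ε) * (1-(1-ε)) + c * (1-ε) * (1-(1-ε))^2 - kg * (1-ε)
            = (1-ε) * (lg * ε + c * ε^2 - kg) := by ring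
        rw [heq] at hu
        have h1ε : 0 < 1 - ε := by linarith
        have hinner : 0 < lg * ε + c * ε^2 - kg := by
          by_contra hcon
          push_neg at hcon
          have := mul_nonpos_of_nonneg_of_nonpos h1ε.le hcon
          linarith
        have e1 : c * ε^2 ≤ |c| * ε^2 := mul_le_mul_of_nonneg_right hc1 (sq_nonneg ε)
        have eε : ε^2 ≤ ε := by nlinarith
        have e2 : |c| * ε^2 ≤ |c| * ε := mul_le_mul_of_nonneg_left eε habs
        linarith
      subst hkg0
      -- Step 2: 0 < ki - li from negativity at γ/2
      have h1 := hneg (γ/2) (by linarith) (by linarith)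
      have heq1 : lg * (γ/2) * (1-γ/2) + (li - lg - (ki - 0)) * (γ/2) * (1-γ/2)^2 - 0 * (γ/2)
          = (γ/2) * (1-γ/2) * (lg * (γ/2) - (ki - li) * (1 - γ/2)) := by ring
      rw [heq1] at h1
      have hγ2 : 0 < γ/2 := by linarith
      have hγ3 : 0 < 1 - γ/2 := by linarith
      have hr : 0 < ki - li := by
        by_contra hr'
        push_neg at hr'
        have e1 : 0 ≤ lg * (γ/2) - (ki - li) * (1 - γ/2) := by
          have := mul_nonneg (neg_nonneg.2 hr') hγ3.le
          have := mul_nonneg hlg hγ2.le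
          nlinarith
        have := mul_nonneg (mul_pos hγ2 hγ3).le e1
        linarith
      -- Step 3: 0 < lg from positivity at (γ+1)/2
      have h2 := hpos ((γ+1)/2) (by linarith) (by linarith)
      have heq2 : lg * ((γ+1)/2) * (1-(γ+1)/2) + (li - lg - (ki - 0)) * ((γ+1)/2) * (1-(γ+1)/2)^2 - 0 * ((γ+1)/2)
          = ((γ+1)/2) * (1-(γ+1)/2) * (lg * ((γ+1)/2) - (ki - li) * (1 - (γ+1)/2)) := by ring
      rw [heq2] at h2
      have hu2 : 0 < (γ+1)/2 := by linarith
      have hu3 : 0 < 1 - (γ+1)/2 := by linarith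
      have hlgp : 0 < lg := by
        by_contra hlg'
        push_neg at hlg'
        have e1 : lg * ((γ+1)/2) - (ki - li) * (1 - (γ+1)/2) < 0 := by
          have := mul_nonpos_of_nonpos_of_nonneg hlg' hu2.le
          have := mul_pos hr hu3
          linarith
        have := mul_neg_of_pos_of_neg (mul_pos hu2 hu3) e1
        linarith
      exact ⟨rfl, hlgp, hr⟩
    · rintro ⟨hkg0, hlgp, hr⟩
      obtain ⟨a, b, c, d⟩ := aux_main_s2 li lg ki kg hkg0 hlgp hr
      subst hkg0
      exact ⟨(ki-li)/((ki-li)+lg), a, b, by ring, by ring, c, d⟩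
  · rintro ⟨hkg0, hlgp, hr⟩
    exact aux_main_s2 li lg ki kg hkg0 hlgp hr
end

section
/- Let f(u) = -p u(1-u)^2 - q u(1-u) with p = C_i D_i + C_g D_g and q = C_g D_g, where C_g < 0, D_i > 4D_g > 0. Then f is strictly concave on (0,1) (i.e. f'' < 0 on (0,1)) if and only if 0 ≤ s d ≤ 3/2, where s = C_i/|C_g| and d = D_i/D_g. -/
/-!
Expanding, `f u = -(p + q) u + (2p + q) u² - p u³`, so `f''` is affine and `f'' < 0` on `(0, 1)`
exactly when both endpoint values `f''(0) = 2(2p + q)` and `f''(1) = 2(q - p)` are `≤ 0` and not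
both zero; since `q < 0` the last condition is automatic, leaving `q ≤ p ≤ -q/2`. Finally
`s d = Cᵢ Dᵢ / (|C_g| D_g) = (p - q) / (-q)`, and `0 ≤ (p - q) / (-q) ≤ 3/2` is again `q ≤ p ≤ -q/2`.
-/

open Set

lemma hasDerivAt_cubic (a b c d u : ℝ) :
    HasDerivAt (fun u => a + b * u + c * u ^ 2 + d * u ^ 3) (b + 2 * c * u + 3 * d * u ^ 2) u := by
  have h := ((((hasDerivAt_id u).const_mul b).const_add a).add
    ((hasDerivAt_pow 2 u).const_mul c)).add ((hasDerivAt_pow 3 u).const_mul d)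
  exact h.congr_deriv (by push_cast; ring)

def convectiveFlux (p q u : ℝ) : ℝ := -p * u * (1 - u) ^ 2 - q * u * (1 - u)

lemma deriv_convectiveFlux (p q : ℝ) :
    deriv (convectiveFlux p q) = fun u => -(p + q) + 2 * (2 * p + q) * u - 3 * p * u ^ 2 := by
  have hf : convectiveFlux p q = fun u => 0 + -(p + q) * u + (2 * p + q) * u ^ 2 + -p * u ^ 3 := by
    ext u
    unfold convectiveFlux
    ring
  ext u
  rw [hf, (hasDerivAt_cubic _ _ _ _ u).deriv]
  ring

lemma deriv_deriv_convectiveFlux (p q u : ℝ) :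
    deriv (deriv (convectiveFlux p q)) u = (1 - u) * (2 * (2 * p + q)) + u * (2 * (q - p)) := by
  have hf' : deriv (convectiveFlux p q) =
      fun u => -(p + q) + 2 * (2 * p + q) * u + -(3 * p) * u ^ 2 + 0 * u ^ 3 := by
    rw [deriv_convectiveFlux]
    ext u
    ring
  rw [hf', (hasDerivAt_cubic _ _ _ _ u).deriv]
  ring

lemma forall_Ioo_affine_neg_iff {x y : ℝ} :
    (∀ u ∈ Ioo (0 : ℝ) 1, (1 - u) * x + u * y < 0) ↔ x ≤ 0 ∧ y ≤ 0 ∧ (x < 0 ∨ y < 0) := by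
  constructor
  · intro h
    have hIcc : Icc (0 : ℝ) 1 ⊆ {u | (1 - u) * x + u * y ≤ 0} := by
      rw [← closure_Ioo zero_ne_one]
      exact closure_minimal (fun u hu => (h u hu).le) (isClosed_le (by fun_prop) continuous_const)
    have hx : x ≤ 0 := by simpa using hIcc (left_mem_Icc.mpr zero_le_one)
    have hy : y ≤ 0 := by simpa using hIcc (right_mem_Icc.mpr zero_le_one)
    refine ⟨hx, hy, ?_⟩
    by_contra! hxy
    have hmid := h (1 / 2) ⟨by norm_num, by norm_num⟩
    rw [le_antisymm hx hxy.1, le_antisymm hy hxy.2] at hmid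
    norm_num at hmid
  · rintro ⟨hx, hy, hxy⟩ u ⟨hu0, hu1⟩
    rcases hxy with hx' | hy'
    · exact add_neg_of_neg_of_nonpos (mul_neg_of_pos_of_neg (by linarith) hx')
        (mul_nonpos_of_nonneg_of_nonpos hu0.le hy)
    · exact add_neg_of_nonpos_of_neg (mul_nonpos_of_nonneg_of_nonpos (by linarith) hx)
        (mul_neg_of_pos_of_neg hu0 hy')

lemma convectiveFlux_concave_iff {p q : ℝ} (hq : q < 0) :
    (∀ u ∈ Ioo (0 : ℝ) 1, deriv (deriv (convectiveFlux p q)) u < 0) ↔ q ≤ p ∧ p ≤ -q / 2 := by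
  simp only [deriv_deriv_convectiveFlux, forall_Ioo_affine_neg_iff]
  constructor
  · rintro ⟨h0, h1, -⟩
    constructor <;> linarith
  · rintro ⟨hqp, hpq⟩
    refine ⟨by linarith, by linarith, ?_⟩
    rcases hqp.lt_or_eq with hlt | rfl
    · right; linarith
    · left; linarith

lemma div_neg_mem_Icc_iff {p q : ℝ} (hq : q < 0) :
    0 ≤ (p - q) / -q ∧ (p - q) / -q ≤ 3 / 2 ↔ q ≤ p ∧ p ≤ -q / 2 := by
  have hq' : 0 < -q := neg_pos.mpr hq
  rw [le_div_iff₀ hq', div_le_iff₀ hq']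
  constructor <;> rintro ⟨h, h'⟩ <;> constructor <;> linarith

theorem stmt_6_general (Ci Cg Di Dg : ℝ) (hCg : Cg < 0) (h2 : 4 * Dg > 0) :
    let p := Ci * Di + Cg * Dg
    let q := Cg * Dg
    let f : ℝ → ℝ := fun u => -p * u * (1-u)^2 - q * u * (1-u)
    let s := Ci / |Cg|
    let d := Di / Dg
    (∀ u ∈ Set.Ioo (0:ℝ) 1, deriv (deriv f) u < 0) ↔ (0 ≤ s * d ∧ s * d ≤ 3/2) := by
  intro p q f s d
  have hDg : 0 < Dg := by linarith
  have hq : q < 0 := mul_neg_of_neg_of_pos hCg hDg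
  have hsd : s * d = (p - q) / -q := by
    simp only [s, d, p, q, abs_of_neg hCg]
    rw [div_mul_div_comm]
    ring
  rw [hsd, div_neg_mem_Icc_iff hq]
  exact convectiveFlux_concave_iff hq

theorem stmt_6 (Ci Cg Di Dg : ℝ) (hCg : Cg < 0) (h1 : Di > 4 * Dg) (h2 : 4 * Dg > 0) :
    let p := Ci * Di + Cg * Dg
    let q := Cg * Dg
    let f : ℝ → ℝ := fun u => -p * u * (1-u)^2 - q * u * (1-u)
    let s := Ci / |Cg|
    let d := Di / Dg
    (∀ u ∈ Set.Ioo (0:ℝ) 1, deriv (deriv f) u < 0) ↔ (0 ≤ s * d ∧ s * d ≤ 3/2) :=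
  stmt_6_general Ci Cg Di Dg hCg h2
end

section
/- Define τ(ω, γ, t) = (1 - t)(ω^2 + 9γ^2 - 3ωγ) + (5 - 2t)ω - 3(7 - 4t)γ + 4 - t. Then τ(ω, γ, t) > 0 for every (ω, γ) with √3 - 1 < ω < 1 and (2-ω)/3 < γ < 1 - 1/√3, and every t ∈ [0, 3/2]. -/
theorem stmt_12 (ω γ t : ℝ)
    (hω : Real.sqrt 3 - 1 < ω) (hω1 : ω < 1)
    (hγ : (2 - ω)/3 < γ) (hγ1 : γ < 1 - 1/Real.sqrt 3)
    (ht : 0 ≤ t) (ht1 : t ≤ 3/2) :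
    0 < (1 - t)*(ω^2 + 9*γ^2 - 3*ω*γ) + (5 - 2*t)*ω - 3*(7 - 4*t)*γ + 4 - t := by
  have hs : (Real.sqrt 3)^2 = 3 := Real.sq_sqrt (by norm_num)
  have hs1 : (1:ℝ) < Real.sqrt 3 := by nlinarith [Real.sqrt_nonneg 3]
  have hs2 : Real.sqrt 3 < 2 := by nlinarith [Real.sqrt_nonneg 3]
  set s := Real.sqrt 3 with hsdef
  -- rewrite the γ upper bound without division: 1 - 1/s = (3 - s)/3
  have hγ1' : 3*γ < 3 - s := by
    have h0 : 1 - 1/s = (3 - s)/3 := by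
      field_simp
      nlinarith
    rw [h0] at hγ1
    linarith
  have hγ' : 2 - ω < 3*γ := by linarith
  -- endpoint t = 0
  have hE0 : 0 < ω^2 + 9*γ^2 - 3*ω*γ + 5*ω - 21*γ + 4 := by
    have hu : 0 < ω - (s - 1) := by linarith
    have hw : 0 < (3 - s) - 3*γ := by linarith
    nlinarith [sq_nonneg (ω - (s-1)), sq_nonneg ((3-s) - 3*γ), mul_pos hu hw,
      mul_pos (by linarith : (0:ℝ) < 3*s) (add_pos hu hw)]
  -- endpoint t = 3/2
  have hE1 : 0 < -(1/2)*(ω^2 + 9*γ^2 - 3*ω*γ) + 2*ω - 3*γ + 5/2 := by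
    nlinarith [sq_nonneg (ω - 3*γ), sq_nonneg (ω + 3*γ - 2), sq_nonneg (3*γ - 1)]
  rcases eq_or_lt_of_le ht with rfl | htpos
  · nlinarith [hE0]
  · have h1 : 0 ≤ 1 - 2*t/3 := by linarith
    have h2 : 0 < 2*t/3 := by linarith
    nlinarith [mul_nonneg h1 (le_of_lt hE0), mul_pos h2 hE1]
end

section
/- For ω ∈ (0,1), the inequality 12(2+3ω)/(4+ω)^2 > 1 + 1/ω holds if and only if ω^3 - 27ω^2 + 16 < 0; the cubic ω^3 - 27ω^2 + 16 has exactly one root ω_0 in (0,1), and the inequality holds for ω ∈ (ω_0, 1). Similarly, for ω ∈ (0,1), 1 - 1/ω > -16ω/(ω+2)^2 if and only if ω^3 + 19ω^2 - 4 > 0, and the cubic ω^3 + 19ω^2 - 4 has exactly one root ω̃_0 in (0,1). -/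
lemma aux_iff1 (ω : ℝ) (h0 : 0 < ω) (h1 : ω < 1) :
    12*(2 + 3*ω)/(4 + ω)^2 > 1 + 1/ω ↔ ω^3 - 27*ω^2 + 16 < 0 := by
  have hd : (0:ℝ) < (4 + ω)^2 := by positivity
  rw [gt_iff_lt, show (1:ℝ) + 1/ω = (ω+1)/ω by field_simp, div_lt_div_iff₀ h0 hd]
  constructor <;> intro h <;> nlinarith

lemma aux_iff2 (ω : ℝ) (h0 : 0 < ω) (h1 : ω < 1) :
    1 - 1/ω > -16*ω/(ω + 2)^2 ↔ 0 < ω^3 + 19*ω^2 - 4 := by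
  have hd : (0:ℝ) < (ω + 2)^2 := by positivity
  rw [gt_iff_lt, show (1:ℝ) - 1/ω = (ω-1)/ω by field_simp, div_lt_div_iff₀ hd h0]
  constructor <;> intro h <;> nlinarith

lemma aux_root1 : ∃ ω₀ ∈ Set.Ioo (0:ℝ) 1, ω₀^3 - 27*ω₀^2 + 16 = 0 := by
  have hc : ContinuousOn (fun x : ℝ => x^3 - 27*x^2 + 16) (Set.Icc 0 1) := by
    fun_prop
  have h := intermediate_value_Ioo' (by norm_num : (0:ℝ) ≤ 1) hc
    (by norm_num : (0:ℝ) ∈ Set.Ioo ((1:ℝ)^3 - 27*1^2 + 16) ((0:ℝ)^3 - 27*0^2 + 16))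
  obtain ⟨x, hx, hfx⟩ := h
  exact ⟨x, hx, hfx⟩

lemma aux_root2 : ∃ ω₁ ∈ Set.Ioo (0:ℝ) 1, ω₁^3 + 19*ω₁^2 - 4 = 0 := by
  have hc : ContinuousOn (fun x : ℝ => x^3 + 19*x^2 - 4) (Set.Icc 0 1) := by
    fun_prop
  have h := intermediate_value_Ioo (by norm_num : (0:ℝ) ≤ 1) hc
    (by norm_num : (0:ℝ) ∈ Set.Ioo ((0:ℝ)^3 + 19*0^2 - 4) ((1:ℝ)^3 + 19*1^2 - 4))
  obtain ⟨x, hx, hfx⟩ := h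
  exact ⟨x, hx, hfx⟩

theorem stmt_19 :
    (∀ ω ∈ Set.Ioo (0:ℝ) 1,
      (12*(2 + 3*ω)/(4 + ω)^2 > 1 + 1/ω ↔ ω^3 - 27*ω^2 + 16 < 0)) ∧
    (∃ ω₀ ∈ Set.Ioo (0:ℝ) 1,
      ω₀^3 - 27*ω₀^2 + 16 = 0 ∧
      (∀ x ∈ Set.Ioo (0:ℝ) 1, x^3 - 27*x^2 + 16 = 0 → x = ω₀) ∧
      (∀ ω ∈ Set.Ioo ω₀ (1:ℝ), 12*(2 + 3*ω)/(4 + ω)^2 > 1 + 1/ω)) ∧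
    (∀ ω ∈ Set.Ioo (0:ℝ) 1,
      (1 - 1/ω > -16*ω/(ω + 2)^2 ↔ 0 < ω^3 + 19*ω^2 - 4)) ∧
    (∃ ω₁ ∈ Set.Ioo (0:ℝ) 1,
      ω₁^3 + 19*ω₁^2 - 4 = 0 ∧
      (∀ x ∈ Set.Ioo (0:ℝ) 1, x^3 + 19*x^2 - 4 = 0 → x = ω₁)) := by
  refine ⟨fun ω hω => aux_iff1 ω hω.1 hω.2, ?_, fun ω hω => aux_iff2 ω hω.1 hω.2, ?_⟩
  · obtain ⟨ω₀, hω₀, hroot⟩ := aux_root1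
    have hb : (16:ℝ) < 27 * ω₀ := by nlinarith [pow_pos hω₀.1 3, mul_pos hω₀.1 hω₀.1, hω₀.2]
    refine ⟨ω₀, hω₀, hroot, ?_, ?_⟩
    · rintro x ⟨hx0, hx1⟩ hx
      have hbx : (16:ℝ) < 27 * x := by nlinarith [pow_pos hx0 3, mul_pos hx0 hx0]
      have key : (x - ω₀) * (x^2 + x*ω₀ + ω₀^2 - 27*(x + ω₀)) = 0 := by
        linear_combination hx - hroot
      have hS : x^2 + x*ω₀ + ω₀^2 - 27*(x + ω₀) < 0 := by
        nlinarith [mul_pos hx0 hω₀.1, hω₀.2, sq_nonneg x, sq_nonneg ω₀]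
      rcases mul_eq_zero.mp key with h | h
      · linarith [sub_eq_zero.mp h]
      · linarith
    · rintro ω ⟨hω1, hω2⟩
      have h0 : 0 < ω := lt_trans hω₀.1 hω1
      rw [aux_iff1 ω h0 hω2]
      have key : ω^3 - 27*ω^2 + 16 = (ω - ω₀) * (ω^2 + ω*ω₀ + ω₀^2 - 27*(ω + ω₀)) := by
        linear_combination hroot
      rw [key]
      apply mul_neg_of_pos_of_neg (by linarith)
      nlinarith [mul_pos h0 hω₀.1, hω₀.2, sq_nonneg ω, sq_nonneg ω₀]
  · obtain ⟨ω₁, hω₁, hroot⟩ := aux_root2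
    refine ⟨ω₁, hω₁, hroot, ?_⟩
    rintro x ⟨hx0, hx1⟩ hx
    nlinarith [sq_nonneg (x - ω₁), sq_nonneg (x + ω₁), hω₁.1, hω₁.2]
end
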